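/- Let Π₀ and Π₁ be convex decompositions of the closed regions CH(P) \ Int(CH(P')) and CH(P') respectively, where P' ⊆ P and both use only vertices from P with no point of P interior to any polygon. If 𝒫₀ ∈ Π₀ and 𝒫₁ ∈ Π₁ share a common edge e and conv(𝒫₀ ∪ 𝒫₁) = 𝒫₀ ∪ 𝒫₁ (i.e., their union is convex), then (Π₀ ∪ Π₁ \ {𝒫₀, 𝒫₁}) ∪ {𝒫₀ ∪ 𝒫₁} is a convex decomposition of P with |Π₀| + |Π₁| − 1 elements. -/

import Mathlib

/-- Points of the plane. -/
abbrev Pt := ℝ × ℝ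

/-- A finite point set is in general position if no three of its points are collinear. -/
def GenPos (P : Finset Pt) : Prop :=
  ∀ p ∈ P, ∀ q ∈ P, ∀ r ∈ P, p ≠ q → q ≠ r → p ≠ r → ¬ Collinear ℝ ({p, q, r} : Set Pt)

open Classical in
/-- The vertices of the convex hull of `P`. -/
noncomputable def hullB (P : Finset Pt) : Finset Pt :=
  P.filter (fun p => p ∉ convexHull ℝ ((P : Set Pt) \ {p}))

open Classical in
/-- The interior points of `P` (the points that are not hull vertices). -/
noncomputable def intI (P : Finset Pt) : Finset Pt := P \ hullB P

/-- A closed convex polygon with vertices in `P`. -/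
def IsPolygonOn (P : Finset Pt) (C : Set Pt) : Prop :=
  ∃ V : Finset Pt, V ⊆ P ∧ 3 ≤ V.card ∧ C = convexHull ℝ (V : Set Pt)

/-- A convex decomposition of a region `R` with respect to `P`: closed convex polygons
with vertices in `P`, pairwise disjoint interiors, union `R`, and no point of `P`
in the interior of any polygon. -/
def IsConvexDecompOfRegion (P : Finset Pt) (R : Set Pt) (D : Finset (Set Pt)) : Prop :=
  (∀ C ∈ D, IsPolygonOn P C) ∧
  (∀ C ∈ D, ∀ C' ∈ D, C ≠ C' → interior C ∩ interior C' = ∅) ∧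
  (⋃ C ∈ D, C) = R ∧
  (∀ C ∈ D, ∀ p ∈ P, (p : Pt) ∉ interior C)

/-- A convex decomposition of the point set `P`. -/
def IsConvexDecomp (P : Finset Pt) (D : Finset (Set Pt)) : Prop :=
  IsConvexDecompOfRegion P (convexHull ℝ (P : Set Pt)) D

/-- `uMin P` is the minimum number of polygons in a convex decomposition of `P`. -/
noncomputable def uMin (P : Finset Pt) : ℕ :=
  sInf {n | ∃ D : Finset (Set Pt), IsConvexDecomp P D ∧ D.card = n}

/-- `p` and `q` are the endpoints of an edge of the convex hull of `P`. -/
def IsHullEdge (P : Finset Pt) (p q : Pt) : Prop :=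
  p ∈ hullB P ∧ q ∈ hullB P ∧ p ≠ q ∧
    segment ℝ p q ⊆ frontier (convexHull ℝ (P : Set Pt))

/-- `H` is the open half-plane with `q` and `q'` on its boundary containing
no point of `I` (the outer half-plane of the edge `q q'` of `CH(I)`). -/
def IsOuterHalf (I : Finset Pt) (q q' : Pt) (H : Set Pt) : Prop :=
  ∃ f : Pt →ₗ[ℝ] ℝ, f ≠ 0 ∧ f q = f q' ∧ H = {x | f q < f x} ∧ ∀ r ∈ I, f r ≤ f q

/-- The angular domain at `a` bounded by the rays from `a` through `b` and through `c`,
containing the segment `b c`. -/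
def angDom (a b c : Pt) : Set Pt :=
  {x | ∃ s t : ℝ, 0 ≤ s ∧ 0 ≤ t ∧ x = a + s • (b - a) + t • (c - a)}

/-- Every triangle of three consecutive hull vertices of `P` contains a point of `P`
in its interior. -/
def TripleFilled (P : Finset Pt) : Prop :=
  ∀ a p c : Pt, IsHullEdge P a p → IsHullEdge P p c → a ≠ c →
    (interior (convexHull ℝ ({a, p, c} : Set Pt)) ∩ (P : Set Pt)).Nonempty

/-- Every outer open half-plane of a hull edge of `I(P)` contains exactly one
hull vertex of `P`. -/
def OuterOne (P : Finset Pt) : Prop :=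
  ∀ q q' H, IsHullEdge (intI P) q q' → IsOuterHalf (intI P) q q' H →
    ((hullB P : Set Pt) ∩ H).ncard = 1

/-!
Merging two pieces along a common edge keeps the covering and the disjointness of interiors, and
the union is a polygon because it is convex; the point is that no point `p` of `P` becomes
interior. Separate the two convex pieces by a line `f = c`. The shared edge `ab` lies on this
line, and so does `p`, since otherwise a neighbourhood of `p` in the union would lie on one side
and hence in one piece. By general position, `p` is `a` or `b`, say `a`. If `a` were interior to
the union, points of the line just beyond `a` would belong to the piece on the side `f ≤ c`
(they are limits of points of the union with `f < c`); but that piece meets the line in the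
convex hull of its vertices on the line, which again by general position is the segment `[a, b]`.
-/

open Set Filter Topology

section Topology

variable {X : Type*} [TopologicalSpace X] {s t u U : Set X}

lemma interior_union_inter_subset_interior_left (hU : IsOpen U) (htU : Disjoint t U) :
    interior (s ∪ t) ∩ U ⊆ interior s :=
  interior_maximal
    (fun _ hx => (interior_subset hx.1).resolve_right fun hxt => htU.notMem_of_mem_left hxt hx.2)
    (isOpen_interior.inter hU)

lemma mem_of_mem_interior_union_of_mem_closure (hs : IsClosed s) (hU : IsOpen U)
    (htU : Disjoint t U) {x : X} (hx : x ∈ interior (s ∪ t)) (hxU : x ∈ closure U) : x ∈ s :=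
  closure_minimal interior_subset hs <|
    closure_mono (interior_union_inter_subset_interior_left hU htU)
      (isOpen_interior.inter_closure ⟨hx, hxU⟩)

lemma disjoint_interior_union_of_subset_closure_interior (ht : t ⊆ closure (interior t))
    (hu : u ⊆ closure (interior u)) (hst : Disjoint (interior s) (interior t))
    (hsu : Disjoint (interior s) (interior u)) : Disjoint (interior s) (interior (t ∪ u)) :=
  (disjoint_union_right.2 ⟨(hst.closure_right isOpen_interior).mono_right ht,
    (hsu.closure_right isOpen_interior).mono_right hu⟩).mono_right interior_subset

end Topology

section Convex

variable {E : Type*} [TopologicalSpace E] [AddCommGroup E] [Module ℝ E]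
  [IsTopologicalAddGroup E] [ContinuousSMul ℝ E]

lemma Convex.subset_closure_interior {s : Set E} (hs : Convex ℝ s) (hs' : (interior s).Nonempty) :
    s ⊆ closure (interior s) :=
  hs.closure_interior_eq_closure_of_nonempty_interior hs' ▸ subset_closure

lemma exists_separating_of_disjoint_interior {s t : Set E} (hs : Convex ℝ s) (ht : Convex ℝ t)
    (hs' : (interior s).Nonempty) (ht' : (interior t).Nonempty)
    (hst : Disjoint (interior s) (interior t)) :
    ∃ (f : StrongDual ℝ E) (c : ℝ), f ≠ 0 ∧ (∀ x ∈ s, f x ≤ c) ∧ ∀ x ∈ t, c ≤ f x := by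
  obtain ⟨f, c, hf, hsf, htf⟩ :=
    geometric_hahn_banach_of_nonempty_interior hs ht.interior hst hs' ht'
  exact ⟨f, c, hf, hsf, fun x hx => closure_minimal htf
    (isClosed_le continuous_const f.continuous) (ht.subset_closure_interior ht' hx)⟩

lemma closure_setOf_lt_eq {f : StrongDual ℝ E} (hf : f ≠ 0) (c : ℝ) :
    closure {x | f x < c} = {x | f x ≤ c} := by
  show closure (f ⁻¹' Iio c) = f ⁻¹' Iic c
  rw [← closure_Iio, (f.isOpenMap_of_ne_zero hf).preimage_closure_eq_closure_preimage f.continuous]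

end Convex

lemma mem_convexHull_inter_of_le {E : Type*} [AddCommGroup E] [Module ℝ E] {s : Set E}
    {f : E →ₗ[ℝ] ℝ} {c : ℝ} (hs : ∀ v ∈ s, f v ≤ c) {x : E} (hx : x ∈ convexHull ℝ s)
    (hfx : f x = c) : x ∈ convexHull ℝ (s ∩ {v | f v = c}) := by
  set F := convexHull ℝ (s ∩ {v | f v = c})
  have hF : ∀ y ∈ F, f y = c := fun y hy =>
    convexHull_min inter_subset_right (convex_hyperplane f.isLinear c) hy
  -- `{f < c} ∪ F` is convex and contains `s`, so it contains `convexHull s`.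
  have hconv : Convex ℝ ({y | f y < c} ∪ F) := by
    have hle : ∀ y ∈ {y | f y < c} ∪ F, f y ≤ c := fun y hy =>
      hy.elim (fun h => le_of_lt h) fun h => (hF y h).le
    refine convex_iff_forall_pos.2 fun y hy z hz a b ha hb hab => ?_
    by_cases hyz : y ∈ F ∧ z ∈ F
    · exact Or.inr (convex_convexHull ℝ _ hyz.1 hyz.2 ha.le hb.le hab)
    · have hlt : f y < c ∨ f z < c := by
        rcases hy with hy | hy <;> rcases hz with hz | hz
        exacts [Or.inl hy, Or.inl hy, Or.inr hz, absurd ⟨hy, hz⟩ hyz]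
      refine Or.inl (show f (a • y + b • z) < c from ?_)
      rw [map_add, map_smul, map_smul, smul_eq_mul, smul_eq_mul]
      have hc : a * c + b * c = c := by rw [← add_mul, hab, one_mul]
      have hy' := mul_nonneg ha.le (sub_nonneg.2 (hle y hy))
      have hz' := mul_nonneg hb.le (sub_nonneg.2 (hle z hz))
      rcases hlt with h | h
      · nlinarith [mul_pos ha (sub_pos.2 h)]
      · nlinarith [mul_pos hb (sub_pos.2 h)]
  have hsub : s ⊆ {y | f y < c} ∪ F := fun v hv =>
    (hs v hv).lt_or_eq.imp id fun h => subset_convexHull ℝ _ ⟨hv, h⟩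
  exact (convexHull_min hsub hconv hx).resolve_left hfx.not_lt

lemma collinear_setOf_eq {E : Type*} [AddCommGroup E] [Module ℝ E] [FiniteDimensional ℝ E]
    (hE : Module.finrank ℝ E = 2) {f : E →ₗ[ℝ] ℝ} (hf : f ≠ 0) (c : ℝ) :
    Collinear ℝ {x | f x = c} := by
  have hspan : vectorSpan ℝ {x | f x = c} ≤ LinearMap.ker f := by
    rw [vectorSpan_def, Submodule.span_le]
    rintro _ ⟨x, hx, y, hy, rfl⟩
    simp_all
  have hker : Module.finrank ℝ (LinearMap.ker f) < 2 :=
    hE ▸ Submodule.finrank_lt fun h => hf (LinearMap.ker_eq_top.1 h)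
  rw [collinear_iff_finrank_le_one]
  exact Nat.le_of_lt_succ ((Submodule.finrank_mono hspan).trans_lt hker)

namespace GenPos

variable {P : Finset Pt}

lemma eq_or_eq_of_map_eq (hgp : GenPos P) {f : StrongDual ℝ Pt} (hf : f ≠ 0) {a b q : Pt}
    (ha : a ∈ P) (hb : b ∈ P) (hab : a ≠ b) (hq : q ∈ P) (hqa : f q = f a) (hqb : f q = f b) :
    q = a ∨ q = b := by
  by_contra! h
  refine hgp q hq a ha b hb h.1 hab h.2
    ((collinear_setOf_eq (f := (f : Pt →ₗ[ℝ] ℝ)) (by simp) ?_ (f q)).subset ?_)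
  · exact fun h0 => hf (ContinuousLinearMap.coe_injective h0)
  · rintro x (rfl | rfl | rfl) <;> simp [← hqa, ← hqb]

lemma interior_convexHull_nonempty (hgp : GenPos P) {V : Finset Pt} (hV : V ⊆ P)
    (hV3 : 3 ≤ V.card) : (interior (convexHull ℝ (V : Set Pt))).Nonempty := by
  obtain ⟨T, hTV, hT⟩ := Finset.exists_subset_card_eq hV3
  obtain ⟨u, v, w, huv, huw, hvw, rfl⟩ := Finset.card_eq_three.1 hT
  have hind : AffineIndependent ℝ ![u, v, w] :=
    affineIndependent_iff_not_collinear_set.2 <|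
      hgp u (hV (hTV (by simp))) v (hV (hTV (by simp))) w (hV (hTV (by simp))) huv hvw huw
  have htop : affineSpan ℝ (range ![u, v, w]) = ⊤ :=
    hind.affineSpan_eq_top_iff_card_eq_finrank_add_one.2 (by simp)
  rw [interior_convexHull_nonempty_iff_affineSpan_eq_top, eq_top_iff, ← htop]
  refine affineSpan_mono ℝ ?_
  rintro _ ⟨i, rfl⟩
  fin_cases i <;> exact hTV (by simp)

lemma interior_nonempty_of_isPolygonOn (hgp : GenPos P) {C : Set Pt} (hC : IsPolygonOn P C) :
    (interior C).Nonempty := by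
  obtain ⟨V, hVP, hV3, rfl⟩ := hC
  exact hgp.interior_convexHull_nonempty hVP hV3

/-- Beyond `a`, the line `ab` would run inside the polygon, whose part on that line is spanned by
its vertices there, that is by `a` and `b`. -/
lemma notMem_interior_convexHull_union_of_separated (hgp : GenPos P) {V : Finset Pt}
    (hV : V ⊆ P) {C : Set Pt} {f : StrongDual ℝ Pt} (hf : f ≠ 0) {c : ℝ}
    (hVf : ∀ v ∈ V, f v ≤ c) (hCf : ∀ x ∈ C, c ≤ f x) {a b : Pt} (ha : a ∈ P) (hb : b ∈ P)
    (hab : a ≠ b) (hfa : f a = c) (hfb : f b = c) :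
    a ∉ interior (convexHull ℝ (V : Set Pt) ∪ C) := by
  intro haK
  obtain ⟨s, hs, hsK⟩ : ∃ s : ℝ, s < 0 ∧
      AffineMap.lineMap a b s ∈ interior (convexHull ℝ (V : Set Pt) ∪ C) := by
    have hlim : Tendsto (AffineMap.lineMap (k := ℝ) a b) (𝓝[<] 0) (𝓝 a) :=
      (AffineMap.lineMap_continuous.tendsto' 0 a (AffineMap.lineMap_apply_zero a b)).mono_left
        nhdsWithin_le_nhds
    exact ((hlim.eventually (isOpen_interior.mem_nhds haK)).and
      self_mem_nhdsWithin).exists.imp fun s h => ⟨h.2, h.1⟩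
  set x := AffineMap.lineMap a b s
  have hfx : f x = c := by
    simp only [x, AffineMap.lineMap_apply_module, map_add, map_smul, smul_eq_mul, hfa, hfb]
    ring
  have hxV : x ∈ convexHull ℝ (V : Set Pt) :=
    mem_of_mem_interior_union_of_mem_closure (V.finite_toSet.isClosed_convexHull (𝕜 := ℝ))
      (isOpen_lt f.continuous continuous_const)
      (disjoint_left.2 fun y hy hlt => (hCf y hy).not_gt hlt) hsK
      (by rw [closure_setOf_lt_eq hf]; exact hfx.le)
  have hxab : x ∈ segment ℝ a b := by
    rw [← convexHull_pair]
    refine convexHull_mono ?_ (mem_convexHull_inter_of_le (f := (f : Pt →ₗ[ℝ] ℝ)) hVf hxV hfx)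
    rintro v ⟨hv, hfv⟩
    exact hgp.eq_or_eq_of_map_eq hf ha hb hab (hV hv) (hfv.trans hfa.symm) (hfv.trans hfb.symm)
  rw [segment_eq_image_lineMap] at hxab
  obtain ⟨t, ht, hts⟩ := hxab
  exact hs.not_ge (AffineMap.lineMap_injective ℝ hab hts ▸ ht.1)

lemma notMem_interior_union (hgp : GenPos P) {C₀ C₁ : Set Pt} (hC₀ : IsPolygonOn P C₀)
    (hC₁ : Convex ℝ C₁) (hC₁' : (interior C₁).Nonempty)
    (hdisj : Disjoint (interior C₀) (interior C₁)) {a b : Pt} (ha : a ∈ P) (hb : b ∈ P)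
    (hab : a ≠ b) (hshared : segment ℝ a b ⊆ C₀ ∩ C₁) {p : Pt} (hp : p ∈ P)
    (hp₀ : p ∉ interior C₀) (hp₁ : p ∉ interior C₁) : p ∉ interior (C₀ ∪ C₁) := by
  intro hpK
  have hC₀' := hgp.interior_nonempty_of_isPolygonOn hC₀
  obtain ⟨V, hVP, -, rfl⟩ := hC₀
  obtain ⟨f, c, hf, h₀, h₁⟩ :=
    exists_separating_of_disjoint_interior (convex_convexHull ℝ _) hC₁ hC₀' hC₁' hdisj
  have hf_eq : ∀ x ∈ segment ℝ a b, f x = c := fun x hx =>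
    le_antisymm (h₀ x (hshared hx).1) (h₁ x (hshared hx).2)
  have hfa := hf_eq a (left_mem_segment ℝ a b)
  have hfb := hf_eq b (right_mem_segment ℝ a b)
  have hfp : f p = c := by
    refine le_antisymm (not_lt.1 fun h => hp₁ ?_) (not_lt.1 fun h => hp₀ ?_)
    · refine interior_union_inter_subset_interior_left (isOpen_lt continuous_const f.continuous)
        (disjoint_left.2 fun y hy hlt => (h₀ y hy).not_gt hlt) ⟨?_, h⟩
      rwa [union_comm]
    · exact interior_union_inter_subset_interior_left (isOpen_lt f.continuous continuous_const)
        (disjoint_left.2 fun y hy hlt => (h₁ y hy).not_gt hlt) ⟨hpK, h⟩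
  have hVf : ∀ v ∈ V, f v ≤ c := fun v hv => h₀ v (subset_convexHull ℝ _ hv)
  rcases hgp.eq_or_eq_of_map_eq hf ha hb hab hp (hfp.trans hfa.symm) (hfp.trans hfb.symm)
    with rfl | rfl
  · exact hgp.notMem_interior_convexHull_union_of_separated hVP hf hVf h₁ ha hb hab hfa hfb hpK
  · exact hgp.notMem_interior_convexHull_union_of_separated hVP hf hVf h₁ hb ha hab.symm hfb hfa
      hpK

end GenPos

lemma IsPolygonOn.convex {P : Finset Pt} {C : Set Pt} (hC : IsPolygonOn P C) : Convex ℝ C := by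
  obtain ⟨V, -, -, rfl⟩ := hC
  exact convex_convexHull ℝ _

lemma IsPolygonOn.union {P : Finset Pt} {C₀ C₁ : Set Pt} (hC₀ : IsPolygonOn P C₀)
    (hC₁ : IsPolygonOn P C₁) (hconv : convexHull ℝ (C₀ ∪ C₁) = C₀ ∪ C₁) :
    IsPolygonOn P (C₀ ∪ C₁) := by
  obtain ⟨V₀, hV₀P, hV₀, rfl⟩ := hC₀
  obtain ⟨V₁, hV₁P, -, rfl⟩ := hC₁
  refine ⟨V₀ ∪ V₁, Finset.union_subset hV₀P hV₁P,
    hV₀.trans (Finset.card_le_card Finset.subset_union_left), ?_⟩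
  rw [← hconv, Finset.coe_union, convexHull_convexHull_union_left,
    convexHull_convexHull_union_right]

namespace IsConvexDecompOfRegion

variable {P : Finset Pt} {R Q : Set Pt} {D D₀ D₁ : Finset (Set Pt)}

lemma subset_of_mem (hD : IsConvexDecompOfRegion P R D) {C : Set Pt} (hC : C ∈ D) : C ⊆ R :=
  hD.2.2.1 ▸ subset_biUnion_of_mem (u := id) hC

lemma disjoint_interior_of_diff (h₀ : IsConvexDecompOfRegion P (R \ interior Q) D₀)
    (h₁ : IsConvexDecompOfRegion P Q D₁) {A B : Set Pt} (hA : A ∈ D₀) (hB : B ∈ D₁) :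
    Disjoint (interior A) (interior B) :=
  disjoint_left.2 fun _ hxA hxB =>
    (h₀.subset_of_mem hA (interior_subset hxA)).2 (interior_mono (h₁.subset_of_mem hB) hxB)

lemma disjoint_of_diff (hgp : GenPos P) (h₀ : IsConvexDecompOfRegion P (R \ interior Q) D₀)
    (h₁ : IsConvexDecompOfRegion P Q D₁) : Disjoint D₀ D₁ :=
  Finset.disjoint_left.2 fun A hA₀ hA₁ =>
    (hgp.interior_nonempty_of_isPolygonOn (h₀.1 A hA₀)).ne_empty
      (disjoint_self.1 (disjoint_interior_of_diff h₀ h₁ hA₀ hA₁))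

lemma union_of_diff [DecidableEq (Set Pt)] (h₀ : IsConvexDecompOfRegion P (R \ interior Q) D₀)
    (h₁ : IsConvexDecompOfRegion P Q D₁) (hQR : Q ⊆ R) :
    IsConvexDecompOfRegion P R (D₀ ∪ D₁) := by
  refine ⟨fun C hC => ?_, fun C hC C' hC' hne => ?_, ?_, fun C hC => ?_⟩
  · rcases Finset.mem_union.1 hC with hC | hC
    exacts [h₀.1 C hC, h₁.1 C hC]
  · rw [← disjoint_iff_inter_eq_empty]
    rcases Finset.mem_union.1 hC with hC | hC <;> rcases Finset.mem_union.1 hC' with hC' | hC'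
    · exact disjoint_iff_inter_eq_empty.2 (h₀.2.1 C hC C' hC' hne)
    · exact disjoint_interior_of_diff h₀ h₁ hC hC'
    · exact (disjoint_interior_of_diff h₀ h₁ hC' hC).symm
    · exact disjoint_iff_inter_eq_empty.2 (h₁.2.1 C hC C' hC' hne)
  · rw [Finset.set_biUnion_union, h₀.2.2.1, h₁.2.2.1]
    refine subset_antisymm (union_subset sdiff_subset hQR) fun x hx => ?_
    by_cases hxQ : x ∈ interior Q
    exacts [Or.inr (interior_subset hxQ), Or.inl ⟨hx, hxQ⟩]
  · rcases Finset.mem_union.1 hC with hC | hC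
    exacts [h₀.2.2.2 C hC, h₁.2.2.2 C hC]

variable [DecidableEq (Set Pt)] {C₀ C₁ : Set Pt}

lemma merge (hgp : GenPos P) (hD : IsConvexDecompOfRegion P R D) (hC₀ : C₀ ∈ D) (hC₁ : C₁ ∈ D)
    (hne : C₀ ≠ C₁) (hconv : convexHull ℝ (C₀ ∪ C₁) = C₀ ∪ C₁)
    (hP : ∀ p ∈ P, p ∉ interior (C₀ ∪ C₁)) :
    IsConvexDecompOfRegion P R (insert (C₀ ∪ C₁) ((D.erase C₀).erase C₁)) := by
  obtain ⟨hpoly, hdisj, hcover, hfree⟩ := hD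
  have hrest : ∀ {C}, C ∈ (D.erase C₀).erase C₁ → C ∈ D ∧ C ≠ C₀ ∧ C ≠ C₁ := fun hC => by
    simp only [Finset.mem_erase] at hC
    exact ⟨hC.2.2, hC.2.1, hC.1⟩
  have hsub : ∀ C ∈ D, C ⊆ closure (interior C) := fun C hC =>
    (hpoly C hC).convex.subset_closure_interior (hgp.interior_nonempty_of_isPolygonOn (hpoly C hC))
  have hdisjK : ∀ C ∈ (D.erase C₀).erase C₁, Disjoint (interior C) (interior (C₀ ∪ C₁)) := by
    intro C hC
    obtain ⟨hC, h₀, h₁⟩ := hrest hC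
    exact disjoint_interior_union_of_subset_closure_interior (hsub C₀ hC₀) (hsub C₁ hC₁)
      (disjoint_iff_inter_eq_empty.2 (hdisj C hC C₀ hC₀ h₀))
      (disjoint_iff_inter_eq_empty.2 (hdisj C hC C₁ hC₁ h₁))
  refine ⟨Finset.forall_mem_insert .. |>.2 ⟨(hpoly C₀ hC₀).union (hpoly C₁ hC₁) hconv,
      fun C hC => hpoly C (hrest hC).1⟩, fun C hC C' hC' hne' => ?_, ?_,
    Finset.forall_mem_insert .. |>.2 ⟨hP, fun C hC => hfree C (hrest hC).1⟩⟩
  · rw [← disjoint_iff_inter_eq_empty]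
    rcases Finset.mem_insert.1 hC with rfl | hC <;> rcases Finset.mem_insert.1 hC' with rfl | hC'
    · exact absurd rfl hne'
    · exact (hdisjK C' hC').symm
    · exact hdisjK C hC
    · exact disjoint_iff_inter_eq_empty.2 (hdisj C (hrest hC).1 C' (hrest hC').1 hne')
  · rw [← hcover]
    conv_rhs =>
      rw [← Finset.insert_erase hC₀, ← Finset.insert_erase (Finset.mem_erase.2 ⟨hne.symm, hC₁⟩)]
    simp only [Finset.set_biUnion_insert, union_assoc]

lemma card_merge (hgp : GenPos P) (hD : IsConvexDecompOfRegion P R D) (hC₀ : C₀ ∈ D)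
    (hC₁ : C₁ ∈ D) (hne : C₀ ≠ C₁) :
    (insert (C₀ ∪ C₁) ((D.erase C₀).erase C₁)).card = D.card - 1 := by
  have hK : C₀ ∪ C₁ ∉ (D.erase C₀).erase C₁ := by
    intro hK
    simp only [Finset.mem_erase] at hK
    obtain ⟨z, hz⟩ := hgp.interior_nonempty_of_isPolygonOn (hD.1 C₀ hC₀)
    exact eq_empty_iff_forall_notMem.1 (hD.2.1 _ hK.2.2 C₀ hC₀ hK.2.1) z
      ⟨interior_mono subset_union_left hz, hz⟩
  have hC₁' : C₁ ∈ D.erase C₀ := Finset.mem_erase.2 ⟨hne.symm, hC₁⟩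
  have hpos := Finset.card_pos.2 ⟨C₁, hC₁'⟩
  rw [Finset.card_erase_of_mem hC₀] at hpos
  rw [Finset.card_insert_of_notMem hK, Finset.card_erase_of_mem hC₁',
    Finset.card_erase_of_mem hC₀]
  omega

end IsConvexDecompOfRegion

open Classical in
/-- **Merging step.** If `Π₀` decomposes `CH(P) \ Int(CH(P'))` and `Π₁` decomposes
`CH(P')`, and elements `𝒫₀ ∈ Π₀`, `𝒫₁ ∈ Π₁` share a common edge and have convex union,
then replacing them by their union gives a convex decomposition of `P` with
`|Π₀| + |Π₁| − 1` elements. -/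
theorem merge_decompositions (P P' : Finset Pt) (hgp : GenPos P) (hsub : P' ⊆ P)
    (D0 D1 : Finset (Set Pt))
    (h0 : IsConvexDecompOfRegion P
      (convexHull ℝ (P : Set Pt) \ interior (convexHull ℝ (P' : Set Pt))) D0)
    (h1 : IsConvexDecompOfRegion P (convexHull ℝ (P' : Set Pt)) D1)
    (C0 C1 : Set Pt) (hC0 : C0 ∈ D0) (hC1 : C1 ∈ D1)
    (a b : Pt) (ha : a ∈ P) (hb : b ∈ P) (hab : a ≠ b)
    (hshared : segment ℝ a b ⊆ C0 ∩ C1)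
    (hconv : convexHull ℝ (C0 ∪ C1) = C0 ∪ C1) :
    IsConvexDecompOfRegion P (convexHull ℝ (P : Set Pt))
      (insert (C0 ∪ C1) (((D0 ∪ D1).erase C0).erase C1)) ∧
    (insert (C0 ∪ C1) (((D0 ∪ D1).erase C0).erase C1)).card = D0.card + D1.card - 1 := by
  have hD := h0.union_of_diff h1 (convexHull_mono (by exact_mod_cast hsub))
  have hdisj := h0.disjoint_interior_of_diff h1 hC0 hC1
  have hC1int := hgp.interior_nonempty_of_isPolygonOn (h1.1 C1 hC1)
  have hne : C0 ≠ C1 := fun h => hC1int.ne_empty (disjoint_self.1 (h ▸ hdisj))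
  have hP : ∀ p ∈ P, p ∉ interior (C0 ∪ C1) := fun p hp =>
    hgp.notMem_interior_union (h0.1 C0 hC0) (h1.1 C1 hC1).convex hC1int hdisj ha hb hab hshared hp
      (h0.2.2.2 C0 hC0 p hp) (h1.2.2.2 C1 hC1 p hp)
  have hC0D := Finset.mem_union_left D1 hC0
  have hC1D := Finset.mem_union_right D0 hC1
  refine ⟨hD.merge hgp hC0D hC1D hne hconv hP, ?_⟩
  rw [hD.card_merge hgp hC0D hC1D hne, Finset.card_union_of_disjoint (h0.disjoint_of_diff hgp h1)]
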